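/- Duality between the d-plane transform and its dual transform in R^n: Let 1 ≤ d < n, let f ∈ C_c(ℝⁿ), and let Φ be a complex-valued function on the set of affine d-dimensional planes in ℝⁿ such that the map (g,w) ↦ Φ(g·(E_d + ŵ)) on O(n) × ℝ^{n−d} is continuous and bounded. Define the d-plane transform f̂(ξ) = ∫_ξ f (integral with respect to d-dimensional Lebesgue measure on the plane ξ) and the dual transform Φ̌(x) = ∫_{O(n)} Φ(x + g·E_d) dg (Haar probability measure on O(n)). Then ∫_{ℝⁿ} f(x) Φ̌(x) dx = ∫_{O(n)} ∫_{ℝ^{n−d}} f̂(g·(E_d + ŵ)) Φ(g·(E_d + ŵ)) dw dg, both sides being absolutely convergent. -/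

import Mathlib

open MeasureTheory Real Set

noncomputable section

/-- The orthogonal group `O(n)`. -/
abbrev OGn (n : ℕ) := Matrix.orthogonalGroup (Fin n) ℝ

instance (n : ℕ) : MeasurableSpace (OGn n) := borel _

instance (n : ℕ) : BorelSpace (OGn n) := ⟨rfl⟩

/-- The point `g·(ŵ + t₁e₁ + ⋯ + t_d e_d)` of the affine `d`-plane `g·(E_d + ŵ)`, where
`E_d = span(e₁,…,e_d)` and `ŵ = Σ_{i>d} wᵢeᵢ`. -/
def planePt (n d : ℕ) (hdn : d < n) (g : OGn n) (w : Fin (n - d) → ℝ)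
    (t : Fin d → ℝ) : EuclideanSpace ℝ (Fin n) :=
  Matrix.toEuclideanLin (g : Matrix (Fin n) (Fin n) ℝ)
    ((∑ i : Fin (n - d), w i •
        EuclideanSpace.single (⟨d + i.1, by have := i.2; omega⟩ : Fin n) (1:ℝ)) +
      ∑ i : Fin d, t i • EuclideanSpace.single (⟨i.1, lt_trans i.2 hdn⟩ : Fin n) (1:ℝ))

/-- The affine `d`-plane `g·(E_d + ŵ)` in `ℝⁿ`, as a subset of `ℝⁿ`. -/
def planeOf (n d : ℕ) (hdn : d < n) (g : OGn n) (w : Fin (n - d) → ℝ) :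
    Set (EuclideanSpace ℝ (Fin n)) :=
  Set.range (planePt n d hdn g w)

/-- The `d`-plane transform `f̂(g·(E_d + ŵ)) = ∫_{ℝ^d} f(g·(ŵ + Σᵢ tᵢeᵢ)) dt`, the
integral of `f` over the plane `g·(E_d + ŵ)` with respect to `d`-dimensional Lebesgue
measure on it. -/
def dplaneTransform (n d : ℕ) (hdn : d < n) (f : EuclideanSpace ℝ (Fin n) → ℂ)
    (g : OGn n) (w : Fin (n - d) → ℝ) : ℂ :=
  ∫ t : Fin d → ℝ, f (planePt n d hdn g w t)

/-- The dual `d`-plane transform `Φ̌(x) = ∫_{O(n)} Φ(x + g·E_d) dg`, with `ν` the Haar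
probability measure of `O(n)`; `x + g·E_d` is the `d`-plane through `x` with direction
`g·E_d`. -/
def dualDplane (n d : ℕ) (hdn : d < n) (ν : Measure (OGn n))
    (Φ : Set (EuclideanSpace ℝ (Fin n)) → ℂ) (x : EuclideanSpace ℝ (Fin n)) : ℂ :=
  ∫ g : OGn n, Φ (Set.range (fun t : Fin d → ℝ =>
    x + Matrix.toEuclideanLin (g : Matrix (Fin n) (Fin n) ℝ)
      (∑ i : Fin d, t i • EuclideanSpace.single (⟨i.1, lt_trans i.2 hdn⟩ : Fin n) (1:ℝ)))) ∂ν

/-! For fixed `g ∈ O(n)`, `(w, t) ↦ g·(ŵ + t̂)` is a measure-preserving bijection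
`ℝ^{n-d} × ℝ^d ≃ ℝⁿ`, and the plane `x + g·E_d` is `g·(E_d + ŵ)` where `w` consists of the last
`n - d` coordinates of `g⁻¹x`. So the skew product `(g, w, t) ↦ (g, g·(ŵ + t̂))` preserves
`ν × vol`, and the duality is Fubini for `(g, x) ↦ f(x) Φ(x + g·E_d)` on `O(n) × ℝⁿ`, followed by
this change of variables and Fubini in `t`. -/

section Planes

variable (n d : ℕ) (hdn : d < n)

def finSumSubEquiv (h : d ≤ n) : Fin d ⊕ Fin (n - d) ≃ Fin n :=
  finSumFinEquiv.trans (finCongr (Nat.add_sub_of_le h))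

def planeCoord : (Fin (n - d) → ℝ) × (Fin d → ℝ) ≃ᵐ EuclideanSpace ℝ (Fin n) :=
  MeasurableEquiv.prodComm.trans <| (MeasurableEquiv.sumPiEquivProdPi fun _ => ℝ).symm.trans <|
    (MeasurableEquiv.piCongrLeft (fun _ => ℝ) (finSumSubEquiv n d hdn.le)).trans
      (MeasurableEquiv.toLp 2 (Fin n → ℝ))

theorem measurePreserving_planeCoord : MeasurePreserving (planeCoord n d hdn) :=
  (EuclideanSpace.volume_preserving_symm_measurableEquiv_toLp (Fin n)).symm.comp <|
    (volume_measurePreserving_piCongrLeft _ _).comp <|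
      (volume_measurePreserving_sumPiEquivProdPi_symm _).comp <|
        Measure.measurePreserving_swap (μ := volume) (ν := volume)

theorem planeCoord_apply (w : Fin (n - d) → ℝ) (t : Fin d → ℝ) :
    planeCoord n d hdn (w, t) =
      (∑ i : Fin (n - d), w i •
        EuclideanSpace.single (⟨d + i.1, by have := i.2; omega⟩ : Fin n) (1:ℝ)) +
      ∑ i : Fin d, t i • EuclideanSpace.single (⟨i.1, lt_trans i.2 hdn⟩ : Fin n) (1:ℝ) := by
  have hcoord (j : Fin d ⊕ Fin (n - d)) :
      planeCoord n d hdn (w, t) (finSumSubEquiv n d hdn.le j) = Sum.elim t w j := by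
    rcases j with i | i <;> exact MeasurableEquiv.piCongrLeft_apply_apply _ _ _
  conv_lhs => rw [← (EuclideanSpace.basisFun (Fin n) ℝ).sum_repr (planeCoord n d hdn (w, t))]
  rw [← (finSumSubEquiv n d hdn.le).sum_comp, Fintype.sum_sum_type, add_comm]
  simp only [EuclideanSpace.basisFun_repr, EuclideanSpace.basisFun_apply, hcoord,
    Sum.elim_inl, Sum.elim_inr]
  rfl

def toEuclideanIsometry : OGn n →* (EuclideanSpace ℝ (Fin n) ≃ₗᵢ[ℝ] EuclideanSpace ℝ (Fin n)) :=
  Unitary.linearIsometryEquiv.toMonoidHom.comp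
    (Unitary.map ⟨(Matrix.toEuclideanCLM (n := Fin n) (𝕜 := ℝ)).toRingEquiv.toMonoidHom,
      map_star (Matrix.toEuclideanCLM (n := Fin n) (𝕜 := ℝ))⟩).toMonoidHom

theorem toEuclideanIsometry_apply (g : OGn n) (v : EuclideanSpace ℝ (Fin n)) :
    toEuclideanIsometry n g v = Matrix.toEuclideanLin (g : Matrix (Fin n) (Fin n) ℝ) v :=
  rfl

theorem toEuclideanIsometry_inv (g : OGn n) :
    toEuclideanIsometry n g⁻¹ = (toEuclideanIsometry n g).symm :=
  map_inv _ g

theorem continuous_toEuclideanIsometry_apply :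
    Continuous fun q : OGn n × EuclideanSpace ℝ (Fin n) => toEuclideanIsometry n q.1 q.2 := by
  simp only [toEuclideanIsometry_apply, Matrix.toLpLin_apply]
  exact (PiLp.continuous_toLp 2 _).comp <|
    (continuous_subtype_val.comp continuous_fst).matrix_mulVec
      ((PiLp.continuous_ofLp 2 _).comp continuous_snd)

theorem planePt_eq (g : OGn n) (w : Fin (n - d) → ℝ) (t : Fin d → ℝ) :
    planePt n d hdn g w t = toEuclideanIsometry n g (planeCoord n d hdn (w, t)) := by
  rw [planeCoord_apply, toEuclideanIsometry_apply, planePt]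

theorem planePt_add (g : OGn n) (w : Fin (n - d) → ℝ) (s t : Fin d → ℝ) :
    planePt n d hdn g w (s + t) = planePt n d hdn g w s +
      Matrix.toEuclideanLin (g : Matrix (Fin n) (Fin n) ℝ)
        (∑ i : Fin d, t i • EuclideanSpace.single (⟨i.1, lt_trans i.2 hdn⟩ : Fin n) (1:ℝ)) := by
  simp only [planePt, ← map_add, Pi.add_apply, add_smul, Finset.sum_add_distrib, add_assoc]

/-- The `w` with `x ∈ g·(E_d + ŵ)`. -/
def planeOffset (g : OGn n) (x : EuclideanSpace ℝ (Fin n)) : Fin (n - d) → ℝ :=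
  ((planeCoord n d hdn).symm ((toEuclideanIsometry n g).symm x)).1

theorem planeOffset_planePt (g : OGn n) (w : Fin (n - d) → ℝ) (t : Fin d → ℝ) :
    planeOffset n d hdn g (planePt n d hdn g w t) = w := by
  simp [planeOffset, planePt_eq]

theorem measurable_planeOffset :
    Measurable fun q : OGn n × EuclideanSpace ℝ (Fin n) => planeOffset n d hdn q.1 q.2 := by
  have hinv : Continuous fun q : OGn n × EuclideanSpace ℝ (Fin n) =>
      (toEuclideanIsometry n q.1).symm q.2 := by
    simp only [← toEuclideanIsometry_inv]
    exact (continuous_toEuclideanIsometry_apply n).comp₂ continuous_fst.inv continuous_snd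
  exact measurable_fst.comp ((planeCoord n d hdn).symm.measurable.comp hinv.measurable)

theorem range_translate_eq_planeOf (g : OGn n) (x : EuclideanSpace ℝ (Fin n)) :
    Set.range (fun t : Fin d → ℝ => x + Matrix.toEuclideanLin (g : Matrix (Fin n) (Fin n) ℝ)
      (∑ i : Fin d, t i • EuclideanSpace.single (⟨i.1, lt_trans i.2 hdn⟩ : Fin n) (1:ℝ))) =
    planeOf n d hdn g (planeOffset n d hdn g x) := by
  set p := (planeCoord n d hdn).symm ((toEuclideanIsometry n g).symm x)
  have hx : x = planePt n d hdn g p.1 p.2 := by simp [p, planePt_eq]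
  change _ = range (planePt n d hdn g p.1)
  rw [← (add_left_surjective p.2).range_comp (planePt n d hdn g p.1)]
  simp only [Function.comp_def, planePt_add, ← hx]

theorem dualDplane_eq (ν : Measure (OGn n)) (Φ : Set (EuclideanSpace ℝ (Fin n)) → ℂ)
    (x : EuclideanSpace ℝ (Fin n)) :
    dualDplane n d hdn ν Φ x = ∫ g, Φ (planeOf n d hdn g (planeOffset n d hdn g x)) ∂ν :=
  integral_congr_ae (ae_of_all _ fun g => congrArg Φ (range_translate_eq_planeOf n d hdn g x))

theorem measurePreserving_prod_planePt (ν : Measure (OGn n)) [SFinite ν] :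
    MeasurePreserving (fun z : OGn n × ((Fin (n - d) → ℝ) × (Fin d → ℝ)) =>
      (z.1, planePt n d hdn z.1 z.2.1 z.2.2)) (ν.prod volume) (ν.prod volume) := by
  have hmeas : Measurable fun q : OGn n × ((Fin (n - d) → ℝ) × (Fin d → ℝ)) =>
      toEuclideanIsometry n q.1 (planeCoord n d hdn q.2) :=
    (continuous_toEuclideanIsometry_apply n).measurable2
      (c := fun g v => toEuclideanIsometry n g v) measurable_fst
      ((planeCoord n d hdn).measurable.comp measurable_snd)
  have hfiber (g : OGn n) :
      volume.map (fun p => toEuclideanIsometry n g (planeCoord n d hdn p)) = volume :=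
    ((toEuclideanIsometry n g).measurePreserving.comp
      (measurePreserving_planeCoord n d hdn)).map_eq
  simpa only [planePt_eq, id_eq, Prod.mk.eta] using
    (MeasurePreserving.id ν).skew_product hmeas (ae_of_all _ hfiber)

theorem integral_prod_eq_integral_planes {ν : Measure (OGn n)} [SFinite ν]
    {F : OGn n × EuclideanSpace ℝ (Fin n) → ℂ} (hF : Integrable F (ν.prod volume)) :
    Integrable (fun q : OGn n × (Fin (n - d) → ℝ) =>
      ∫ t, F (q.1, planePt n d hdn q.1 q.2 t)) (ν.prod volume) ∧
    ∫ z, F z ∂(ν.prod volume) =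
      ∫ q : OGn n × (Fin (n - d) → ℝ),
        (∫ t, F (q.1, planePt n d hdn q.1 q.2 t)) ∂(ν.prod volume) := by
  have hmp := (measurePreserving_prod_planePt n d hdn ν).comp
    (measurePreserving_prodAssoc ν volume volume)
  have hH := (hmp.integrable_comp hF.aestronglyMeasurable).mpr hF
  refine ⟨hH.integral_prod_left, ?_⟩
  have hmap := integral_map (f := F) hmp.measurable.aemeasurable
    (by rw [hmp.map_eq]; exact hF.aestronglyMeasurable)
  rw [hmp.map_eq] at hmap
  exact hmap.trans (integral_prod _ hH)

end Planes

theorem stmt_2_general (n d : ℕ) (hdn : d < n) (ν : Measure (OGn n))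
    [IsProbabilityMeasure ν]
    (f : EuclideanSpace ℝ (Fin n) → ℂ) (hf : Continuous f) (hfc : HasCompactSupport f)
    (Φ : Set (EuclideanSpace ℝ (Fin n)) → ℂ)
    (hΦcont : Continuous (fun q : OGn n × (Fin (n - d) → ℝ) => Φ (planeOf n d hdn q.1 q.2)))
    (hΦbdd : ∃ M : ℝ, ∀ (g : OGn n) (w : Fin (n - d) → ℝ), ‖Φ (planeOf n d hdn g w)‖ ≤ M) :
    Integrable (fun x => f x * dualDplane n d hdn ν Φ x) volume ∧
    Integrable (fun q : OGn n × (Fin (n - d) → ℝ) =>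
      dplaneTransform n d hdn f q.1 q.2 * Φ (planeOf n d hdn q.1 q.2)) (ν.prod volume) ∧
    ∫ x, f x * dualDplane n d hdn ν Φ x =
      ∫ q : OGn n × (Fin (n - d) → ℝ),
        dplaneTransform n d hdn f q.1 q.2 * Φ (planeOf n d hdn q.1 q.2) ∂(ν.prod volume) := by
  obtain ⟨M, hM⟩ := hΦbdd
  set K := fun q : OGn n × (Fin (n - d) → ℝ) => Φ (planeOf n d hdn q.1 q.2)
  have hF : Integrable (fun z : OGn n × EuclideanSpace ℝ (Fin n) =>
      f z.2 * K (z.1, planeOffset n d hdn z.1 z.2)) (ν.prod volume) :=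
    ((hf.integrable_of_hasCompactSupport hfc).comp_snd ν).mul_bdd
      (hΦcont.measurable.comp
        (measurable_fst.prodMk (measurable_planeOffset n d hdn))).aestronglyMeasurable
      (ae_of_all _ fun z => hM _ _)
  have hdual (x : EuclideanSpace ℝ (Fin n)) :
      f x * dualDplane n d hdn ν Φ x = ∫ g, f x * K (g, planeOffset n d hdn g x) ∂ν := by
    rw [dualDplane_eq, ← integral_const_mul]
  have hfiber (q : OGn n × (Fin (n - d) → ℝ)) :
      ∫ t, f (planePt n d hdn q.1 q.2 t) *
          K (q.1, planeOffset n d hdn q.1 (planePt n d hdn q.1 q.2 t)) =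
        dplaneTransform n d hdn f q.1 q.2 * K q := by
    simp only [planeOffset_planePt, integral_mul_const, dplaneTransform]
  obtain ⟨hint, heq⟩ := integral_prod_eq_integral_planes n d hdn hF
  simp only [hfiber] at hint heq
  refine ⟨?_, hint, ?_⟩
  · simpa only [hdual, Function.comp_apply, Prod.swap_prod_mk] using hF.swap.integral_prod_left
  · simp only [hdual]
    rw [← integral_prod_symm _ hF, heq]

/-- duality between the `d`-plane transform and its dual in `ℝⁿ`:
for `f ∈ C_c(ℝⁿ)` and `Φ` a function on the set of affine `d`-planes such that
`(g,w) ↦ Φ(g·(E_d + ŵ))` is continuous and bounded,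
`∫_{ℝⁿ} f(x) Φ̌(x) dx = ∫_{O(n)} ∫_{ℝ^{n−d}} f̂(g·(E_d+ŵ)) Φ(g·(E_d+ŵ)) dw dg`, both sides
being absolutely convergent. -/
theorem stmt_2 (n d : ℕ) (hd : 1 ≤ d) (hdn : d < n) (ν : Measure (OGn n))
    [IsProbabilityMeasure ν] (hinv : ∀ g : OGn n, ν.map (fun h => g * h) = ν)
    (f : EuclideanSpace ℝ (Fin n) → ℂ) (hf : Continuous f) (hfc : HasCompactSupport f)
    (Φ : Set (EuclideanSpace ℝ (Fin n)) → ℂ)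
    (hΦcont : Continuous (fun q : OGn n × (Fin (n - d) → ℝ) => Φ (planeOf n d hdn q.1 q.2)))
    (hΦbdd : ∃ M : ℝ, ∀ (g : OGn n) (w : Fin (n - d) → ℝ), ‖Φ (planeOf n d hdn g w)‖ ≤ M) :
    Integrable (fun x => f x * dualDplane n d hdn ν Φ x) volume ∧
    Integrable (fun q : OGn n × (Fin (n - d) → ℝ) =>
      dplaneTransform n d hdn f q.1 q.2 * Φ (planeOf n d hdn q.1 q.2)) (ν.prod volume) ∧
    ∫ x, f x * dualDplane n d hdn ν Φ x =
      ∫ q : OGn n × (Fin (n - d) → ℝ),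
        dplaneTransform n d hdn f q.1 q.2 * Φ (planeOf n d hdn q.1 q.2) ∂(ν.prod volume) :=
  stmt_2_general n d hdn ν f hf hfc Φ hΦcont hΦbdd
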